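/- arXiv:1306.4449 — 2 statements merged into one kernel-verified Lean document; each statement's English description precedes it below -/
import Mathlib

section
/- Let q > 0, C₁ < 0, M₀ > 0, r ∈ (0,1], ᾱ ∈ (0,1) with [ᾱ-r, ᾱ+r] ⊂ [0,1], and b > 1/q. Then as ε ↓ 0, ε^{b - 1/q}·∫_{ᾱ-r}^{ᾱ+r} (ε - C₁|α - ᾱ|^q)^{-b} dα converges to (2/q)·|C₁|^{-1/q}·Γ(1 + 1/q)·Γ(b - 1/q)·q/Γ(b) · (1/2)·2, i.e. the limit equals 2·Γ(1 + 1/q)·Γ(b - 1/q)/(Γ(b)·|C₁|^{1/q}). -/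
/-!
Translating to the centre and folding the symmetric interval, then substituting
`α - ᾱ = (ε / |C₁|) ^ (1 / q) * s`, turns the left-hand side into
`2 |C₁| ^ (-1 / q) ∫₀^R(ε) (1 + s ^ q) ^ (-b) ds` with `R(ε) = r (|C₁| / ε) ^ (1 / q) → ∞`.
The substitutions `s = x ^ (1 / q)` and `x = t / (1 - t)` identify the limit
`∫₀^∞ (1 + s ^ q) ^ (-b) ds` with `(1 / q) B(1 / q, b - 1 / q) = Γ(1 + 1 / q) Γ(b - 1 / q) / Γ(b)`.
-/

open Real Set Filter Topology
open MeasureTheory intervalIntegral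

theorem Complex.ofReal_betaIntegrand {a c t : ℝ} (ht₀ : 0 ≤ t) (ht₁ : t ≤ 1) :
    ((t ^ (a - 1) * (1 - t) ^ (c - 1) : ℝ) : ℂ) =
      (t : ℂ) ^ ((a : ℂ) - 1) * (1 - t) ^ ((c : ℂ) - 1) := by
  push_cast [Complex.ofReal_cpow ht₀, Complex.ofReal_cpow (sub_nonneg.2 ht₁)]
  rfl

theorem integrableOn_betaIntegrand {a c : ℝ} (ha : 0 < a) (hc : 0 < c) :
    IntegrableOn (fun t : ℝ => t ^ (a - 1) * (1 - t) ^ (c - 1)) (Ioc 0 1) := by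
  have h : IntegrableOn
      (fun t : ℝ => ((t : ℂ) ^ ((a : ℂ) - 1) * (1 - (t : ℂ)) ^ ((c : ℂ) - 1)).re) (Ioc 0 1) :=
    (Complex.betaIntegral_convergent (u := a) (v := c) (by simpa) (by simpa)).1.re
  refine h.congr_fun (fun t ht => ?_) measurableSet_Ioc
  dsimp only
  rw [← Complex.ofReal_betaIntegrand ht.1.le ht.2, Complex.ofReal_re]

theorem integral_betaIntegrand {a c : ℝ} (ha : 0 < a) (hc : 0 < c) :
    ∫ t in (0:ℝ)..1, t ^ (a - 1) * (1 - t) ^ (c - 1) = Gamma a * Gamma c / Gamma (a + c) := by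
  have hB : Complex.betaIntegral a c = ↑(∫ t in (0:ℝ)..1, t ^ (a - 1) * (1 - t) ^ (c - 1)) := by
    rw [Complex.betaIntegral, ← intervalIntegral.integral_ofReal]
    refine intervalIntegral.integral_congr fun t ht => ?_
    rw [uIcc_of_le zero_le_one] at ht
    exact (Complex.ofReal_betaIntegrand ht.1 ht.2).symm
  rw [← ProbabilityTheory.beta, ProbabilityTheory.beta_eq_betaIntegralReal a c ha hc, hB,
    Complex.ofReal_re]

theorem hasDerivAt_div_one_sub {t : ℝ} (ht : t ≠ 1) :
    HasDerivAt (fun t : ℝ => t / (1 - t)) ((1 - t) ^ 2)⁻¹ t := by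
  refine ((hasDerivAt_id' t).fun_div ((hasDerivAt_const t 1).fun_sub (hasDerivAt_id' t))
    (sub_ne_zero.2 ht.symm)).congr_deriv ?_
  ring

theorem injOn_div_one_sub : InjOn (fun t : ℝ => t / (1 - t)) (Iio 1) := by
  intro x hx y hy h
  have hx1 : 1 - x ≠ 0 := sub_ne_zero.2 (ne_of_gt hx)
  have hy1 : 1 - y ≠ 0 := sub_ne_zero.2 (ne_of_gt hy)
  field_simp at h
  linarith

theorem image_div_one_sub_Ioo : (fun t : ℝ => t / (1 - t)) '' Ioo 0 1 = Ioi 0 := by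
  ext x
  constructor
  · rintro ⟨t, ht, rfl⟩
    exact div_pos ht.1 (sub_pos.2 ht.2)
  · intro hx
    have hx1 : 0 < 1 + x := by linarith [mem_Ioi.mp hx]
    refine ⟨x / (1 + x), ⟨div_pos hx hx1, (div_lt_one hx1).2 (by linarith)⟩, ?_⟩
    field_simp
    ring

section

variable {E : Type*} [NormedAddCommGroup E] [NormedSpace ℝ E]

theorem integral_Ioi_eq_integral_Ioo_div_one_sub (g : ℝ → E) :
    ∫ x in Ioi 0, g x = ∫ t in Ioo 0 1, ((1 - t) ^ 2)⁻¹ • g (t / (1 - t)) := by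
  rw [← image_div_one_sub_Ioo, integral_image_eq_integral_abs_deriv_smul measurableSet_Ioo
    (fun t ht => (hasDerivAt_div_one_sub ht.2.ne).hasDerivWithinAt)
    (injOn_div_one_sub.mono fun t ht => ht.2)]
  refine setIntegral_congr_fun measurableSet_Ioo fun t ht => ?_
  rw [abs_of_pos (by have := sub_pos.2 ht.2; positivity)]

theorem integrableOn_Ioi_iff_integrableOn_Ioo_div_one_sub (g : ℝ → E) :
    IntegrableOn g (Ioi 0) ↔
      IntegrableOn (fun t => ((1 - t) ^ 2)⁻¹ • g (t / (1 - t))) (Ioo 0 1) := by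
  rw [← image_div_one_sub_Ioo, integrableOn_image_iff_integrableOn_abs_deriv_smul
    measurableSet_Ioo (fun t ht => (hasDerivAt_div_one_sub ht.2.ne).hasDerivWithinAt)
    (injOn_div_one_sub.mono fun t ht => ht.2)]
  refine integrableOn_congr_fun (fun t ht => ?_) measurableSet_Ioo
  rw [abs_of_pos (by have := sub_pos.2 ht.2; positivity)]

end

theorem inv_sq_one_sub_smul_div_one_sub_eq_betaIntegrand {a c t : ℝ} (ht : t ∈ Ioo (0:ℝ) 1) :
    ((1 - t) ^ 2)⁻¹ • ((t / (1 - t)) ^ (a - 1) * (1 + t / (1 - t)) ^ (-(a + c))) =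
      t ^ (a - 1) * (1 - t) ^ (c - 1) := by
  have hs : 0 < 1 - t := sub_pos.2 ht.2
  have h1 : 1 + t / (1 - t) = (1 - t)⁻¹ := by field_simp; ring
  have h2 : (1 - t) ^ (c - 1) = (1 - t) ^ (a + c) / (1 - t) ^ (a - 1) / (1 - t) ^ 2 := by
    rw [← rpow_sub hs, ← rpow_natCast, ← rpow_sub hs]
    ring_nf
  rw [smul_eq_mul, h1, h2, div_rpow ht.1.le hs.le, inv_rpow hs.le, rpow_neg hs.le, inv_inv]
  ring

theorem integral_rpow_mul_one_add_rpow_neg {a c : ℝ} (ha : 0 < a) (hc : 0 < c) :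
    ∫ x in Ioi 0, x ^ (a - 1) * (1 + x) ^ (-(a + c)) = Gamma a * Gamma c / Gamma (a + c) := by
  rw [integral_Ioi_eq_integral_Ioo_div_one_sub, setIntegral_congr_fun measurableSet_Ioo
      fun t ht => inv_sq_one_sub_smul_div_one_sub_eq_betaIntegrand ht,
    ← integral_Ioc_eq_integral_Ioo, ← intervalIntegral.integral_of_le zero_le_one,
    integral_betaIntegrand ha hc]

theorem integrableOn_rpow_mul_one_add_rpow_neg {a c : ℝ} (ha : 0 < a) (hc : 0 < c) :
    IntegrableOn (fun x : ℝ => x ^ (a - 1) * (1 + x) ^ (-(a + c))) (Ioi 0) :=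
  (integrableOn_Ioi_iff_integrableOn_Ioo_div_one_sub _).2 <|
    ((integrableOn_betaIntegrand ha hc).mono_set Ioo_subset_Ioc_self).congr_fun
      (fun _ ht => (inv_sq_one_sub_smul_div_one_sub_eq_betaIntegrand ht).symm) measurableSet_Ioo

theorem one_add_rpow_one_div_rpow_neg {q b x : ℝ} (hq : 0 < q) (hx : 0 ≤ x) :
    (1 + (x ^ (1 / q)) ^ q) ^ (-b) = (1 + x) ^ (-(1 / q + (b - 1 / q))) := by
  rw [one_div, rpow_inv_rpow hx hq.ne', add_sub_cancel]

theorem integrableOn_one_add_rpow_rpow_neg {q b : ℝ} (hq : 0 < q) (hb : 1 / q < b) :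
    IntegrableOn (fun s : ℝ => (1 + s ^ q) ^ (-b)) (Ioi 0) := by
  rw [← integrableOn_Ioi_comp_rpow_iff' _ (one_div_pos.2 hq).ne']
  refine (integrableOn_rpow_mul_one_add_rpow_neg (one_div_pos.2 hq) (sub_pos.2 hb)).congr_fun
    (fun x hx => ?_) measurableSet_Ioi
  rw [smul_eq_mul, one_add_rpow_one_div_rpow_neg hq hx.le]

theorem integral_one_add_rpow_rpow_neg {q b : ℝ} (hq : 0 < q) (hb : 1 / q < b) :
    ∫ s in Ioi 0, (1 + s ^ q) ^ (-b) = Gamma (1 + 1 / q) * Gamma (b - 1 / q) / Gamma b := by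
  rw [← integral_comp_rpow_Ioi_of_pos (one_div_pos.2 hq), setIntegral_congr_fun measurableSet_Ioi
      fun x hx => by rw [smul_eq_mul, one_add_rpow_one_div_rpow_neg hq hx.le, mul_assoc],
    MeasureTheory.integral_const_mul,
    integral_rpow_mul_one_add_rpow_neg (one_div_pos.2 hq) (sub_pos.2 hb), add_sub_cancel,
    add_comm 1, Gamma_add_one (one_div_pos.2 hq).ne']
  ring

theorem integral_comp_abs_sub {E : Type*} [NormedAddCommGroup E] [NormedSpace ℝ E] {f : ℝ → E}
    (hf : ContinuousOn f (Ici 0)) (c : ℝ) {r : ℝ} (hr : 0 ≤ r) :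
    ∫ x in (c - r)..(c + r), f |x - c| = (2 : ℝ) • ∫ u in (0:ℝ)..r, f u := by
  have hfa : Continuous fun u => f |u| := hf.comp_continuous continuous_abs abs_nonneg
  have hpos : ∫ u in (0:ℝ)..r, f |u| = ∫ u in (0:ℝ)..r, f u :=
    integral_congr fun u hu => by rw [abs_of_nonneg (uIcc_of_le hr ▸ hu).1]
  have hneg : ∫ u in -r..0, f |u| = ∫ u in (0:ℝ)..r, f |u| := by
    simpa using (integral_comp_neg (a := 0) (b := r) fun u => f |u|).symm
  calc ∫ x in (c - r)..(c + r), f |x - c| = ∫ u in -r..r, f |u| := by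
        simpa using integral_comp_sub_right (a := c - r) (b := c + r) (fun u => f |u|) c
    _ = (∫ u in -r..0, f |u|) + ∫ u in (0:ℝ)..r, f |u| :=
        (integral_add_adjacent_intervals (hfa.intervalIntegrable _ _)
          (hfa.intervalIntegrable _ _)).symm
    _ = (2 : ℝ) • ∫ u in (0:ℝ)..r, f u := by rw [hneg, hpos, two_smul]

theorem rpow_mul_integral_add_mul_rpow_rpow_neg {q A b ε r : ℝ} (hq : 0 < q) (hA : 0 < A)
    (hε : 0 < ε) (hr : 0 ≤ r) :
    ε ^ (b - 1 / q) * ∫ u in (0:ℝ)..r, (ε + A * u ^ q) ^ (-b) =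
      A ^ (-(1 / q)) * ∫ s in (0:ℝ)..r / (ε / A) ^ (1 / q), (1 + s ^ q) ^ (-b) := by
  set l := (ε / A) ^ (1 / q) with hl_def
  have hl : 0 < l := rpow_pos_of_pos (div_pos hε hA) _
  have hlq : l ^ q = ε / A := by rw [hl_def, one_div, rpow_inv_rpow (div_pos hε hA).le hq.ne']
  have hsub : ∫ u in (0:ℝ)..r, (ε + A * u ^ q) ^ (-b) =
      l • ∫ s in (0:ℝ)..r / l, (ε + A * (l * s) ^ q) ^ (-b) := by
    have h := smul_integral_comp_mul_left (a := 0) (b := r / l)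
      (fun u => (ε + A * u ^ q) ^ (-b)) l
    rwa [mul_zero, mul_div_cancel₀ r hl.ne', eq_comm] at h
  have hpt : ∀ s ∈ uIcc 0 (r / l),
      (ε + A * (l * s) ^ q) ^ (-b) = ε ^ (-b) * (1 + s ^ q) ^ (-b) := by
    intro s hs
    have hs0 : 0 ≤ s := (uIcc_of_le (div_nonneg hr hl.le) ▸ hs).1
    rw [mul_rpow hl.le hs0, hlq, ← mul_rpow hε.le (by positivity)]
    congr 1
    field_simp
  have hpow : ε ^ (b - 1 / q) * l * ε ^ (-b) = A ^ (-(1 / q)) := by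
    rw [hl_def, div_rpow hε.le hA.le, rpow_neg hA.le, mul_div_assoc', ← rpow_add hε,
      div_mul_eq_mul_div, ← rpow_add hε, sub_add_cancel, add_neg_cancel, rpow_zero, one_div]
  rw [hsub, integral_congr hpt, intervalIntegral.integral_const_mul, smul_eq_mul, ← hpow]
  ring

theorem tendsto_div_div_rpow_nhdsGT_zero_atTop {A p r : ℝ} (hA : 0 < A) (hp : 0 < p)
    (hr : 0 < r) : Tendsto (fun ε => r / (ε / A) ^ p) (𝓝[>] 0) atTop := by
  have h : Tendsto (fun ε : ℝ => (ε / A) ^ p) (𝓝[>] 0) (𝓝[>] 0) := by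
    refine tendsto_nhdsWithin_iff.2 ⟨?_, ?_⟩
    · have hc : Continuous fun ε : ℝ => (ε / A) ^ p :=
        (continuous_id.div_const A).rpow_const fun _ => Or.inr hp.le
      simpa [zero_rpow hp.ne'] using (hc.tendsto 0).mono_left nhdsWithin_le_nhds
    · filter_upwards [self_mem_nhdsWithin] with ε hε using rpow_pos_of_pos (div_pos hε hA) p
  simpa [div_eq_mul_inv] using h.inv_tendsto_nhdsGT_zero.const_mul_atTop hr

theorem asymptotic_integral_power_law_general (q C₁ r abar b : ℝ)
    (hq : 0 < q) (hC₁ : C₁ < 0) (hr : r ∈ Set.Ioc (0:ℝ) 1)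
    (hb : 1 / q < b) :
    Filter.Tendsto
      (fun ε : ℝ => ε ^ (b - 1 / q) *
        ∫ α in (abar - r)..(abar + r), (ε - C₁ * |α - abar| ^ q) ^ (-b))
      (nhdsWithin 0 (Set.Ioi 0))
      (nhds (2 * Real.Gamma (1 + 1 / q) * Real.Gamma (b - 1 / q) /
        (Real.Gamma b * |C₁| ^ (1 / q)))) := by
  have hA : 0 < |C₁| := abs_pos.2 hC₁.ne
  have hscaled : ∀ ε ∈ Ioi (0:ℝ), ε ^ (b - 1 / q) *
      ∫ α in (abar - r)..(abar + r), (ε - C₁ * |α - abar| ^ q) ^ (-b) =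
      2 * (|C₁| ^ (-(1 / q)) * ∫ s in (0:ℝ)..r / (ε / |C₁|) ^ (1 / q), (1 + s ^ q) ^ (-b)) := by
    intro ε hε
    have hf : ContinuousOn (fun u : ℝ => (ε + |C₁| * u ^ q) ^ (-b)) (Ici 0) :=
      (continuous_const.add (continuous_const.mul (continuous_rpow_const hq.le))).continuousOn
        |>.rpow_const fun u hu =>
          Or.inl (add_pos_of_pos_of_nonneg hε (mul_nonneg hA.le (rpow_nonneg hu q))).ne'
    have hC₁_abs : ∀ u, ε - C₁ * u = ε + |C₁| * u := fun u => by rw [abs_of_neg hC₁]; ring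
    simp_rw [hC₁_abs]
    rw [integral_comp_abs_sub hf abar hr.1.le, smul_eq_mul, mul_left_comm,
      rpow_mul_integral_add_mul_rpow_rpow_neg hq hA hε hr.1.le]
  have hlim := ((intervalIntegral_tendsto_integral_Ioi 0
    (integrableOn_one_add_rpow_rpow_neg hq hb)
    (tendsto_div_div_rpow_nhdsGT_zero_atTop hA (one_div_pos.2 hq) hr.1)).const_mul
      (|C₁| ^ (-(1 / q)))).const_mul 2
  refine (tendsto_congr' (eventually_nhdsWithin_of_forall hscaled)).2 ?_
  convert hlim using 2
  rw [integral_one_add_rpow_rpow_neg hq hb, rpow_neg hA.le]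
  ring

theorem asymptotic_integral_power_law (q C₁ M₀ r abar b : ℝ)
    (hq : 0 < q) (hC₁ : C₁ < 0) (hM₀ : 0 < M₀) (hr : r ∈ Set.Ioc (0:ℝ) 1)
    (habar : abar ∈ Set.Ioo (0:ℝ) 1)
    (hsub : Set.Icc (abar - r) (abar + r) ⊆ Set.Icc (0:ℝ) 1)
    (hb : 1 / q < b) :
    Filter.Tendsto
      (fun ε : ℝ => ε ^ (b - 1 / q) *
        ∫ α in (abar - r)..(abar + r), (ε - C₁ * |α - abar| ^ q) ^ (-b))
      (nhdsWithin 0 (Set.Ioi 0))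
      (nhds (2 * Real.Gamma (1 + 1 / q) * Real.Gamma (b - 1 / q) /
        (Real.Gamma b * |C₁| ^ (1 / q)))) :=
  asymptotic_integral_power_law_general q C₁ r abar b hq hC₁ hr hb
end

section
/- Let λ = 1/2 and u₀'(α) = 1 - (4/3)α^{1/3} on [0,1], so that J(α,η) = 1 - (η/2)(1 - (4/3)α^{1/3}) for η ∈ [0,2). Then ∫₀¹ J(α,η)^{-2} dα = -(54(η-6)η - 81(2-η)(6+η)·arctanh(2η/(η-6)))/(4(6+η)η³) for all η ∈ (0,2), and this quantity converges to 27/16 as η ↑ 2. -/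
/-!
Substituting `α = t³` turns the integral into `3 ∫₀¹ t² (a + b t)⁻² dt` with `a = 1 - η/2` and
`b = 2η/3`, which has the elementary antiderivative
`t / b² - (2a / b³) log (a + b t) - (a² / b³) (a + b t)⁻¹`. The logarithm that appears,
`log ((a + b) / a)`, equals `-2 artanh (2η / (η - 6))`. As `η ↑ 2` we have `a ↓ 0`; written with
`a log a` the closed form is continuous at `a = 0`, where it equals `3 / b² = 27/16`.
-/

open Real Set Filter Topology

/-- The inverse hyperbolic tangent, `artanh x = (1/2)·log((1+x)/(1-x))` for `|x| < 1`. -/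
noncomputable def artanh (x : ℝ) : ℝ := (1 / 2) * Real.log ((1 + x) / (1 - x))

theorem intervalIntegral.integral_comp_rpow_inv_natCast {n : ℕ} (hn : n ≠ 0) {f : ℝ → ℝ}
    (hf : ContinuousOn f (Icc 0 1)) :
    ∫ x in (0:ℝ)..1, f (x ^ (n⁻¹ : ℝ)) = ∫ t in (0:ℝ)..1, n * t ^ (n - 1) * f t := by
  have hroot : ContinuousOn (fun x : ℝ => f (x ^ (n⁻¹ : ℝ))) (Icc 0 1) := by
    refine hf.comp (fun x _ => (continuousAt_rpow_const x _ (Or.inr (by positivity))).continuousWithinAt)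
      fun x hx => ⟨rpow_nonneg hx.1 _, rpow_le_one hx.1 hx.2 (by positivity)⟩
  have himage : (· ^ n) '' uIcc (0:ℝ) 1 ⊆ Icc 0 1 := by
    rintro _ ⟨t, ⟨ht0, ht1⟩, rfl⟩
    simp only [zero_le_one, inf_of_le_left, sup_of_le_right] at ht0 ht1
    exact ⟨pow_nonneg ht0 n, pow_le_one₀ ht0 ht1⟩
  have hsubst := intervalIntegral.integral_comp_mul_deriv' (fun t _ => hasDerivAt_pow n t)
    (by fun_prop) (hroot.mono himage)
  simp only [ne_eq, hn, not_false_eq_true, zero_pow, one_pow] at hsubst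
  rw [← hsubst]
  refine intervalIntegral.integral_congr fun t ht => ?_
  rw [uIcc_of_le zero_le_one] at ht
  simp only [Function.comp_apply, pow_rpow_inv_natCast ht.1 hn]
  ring

theorem add_mul_pos_of_mem_Icc {a b t : ℝ} (ha : 0 < a) (hab : 0 < a + b) (ht : t ∈ Icc 0 1) :
    0 < a + b * t := by
  rcases le_total 0 b with hb | hb <;> nlinarith [ht.1, ht.2]

/-- The value of `∫₀¹ t² (a + b t)⁻² dt`, written with `x log x` so that it stays continuous at
`a = 0`. -/
noncomputable def integralSqDivLinearSq (a b : ℝ) : ℝ :=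
  1 / b ^ 2 + a / (b ^ 2 * (a + b)) - 2 / b ^ 3 * (a * log (a + b) - a * log a)

theorem integral_sq_mul_zpow_neg_two {a b : ℝ} (ha : 0 < a) (hab : 0 < a + b) (hb : b ≠ 0) :
    ∫ t in (0:ℝ)..1, t ^ 2 * (a + b * t) ^ (-2 : ℤ) = integralSqDivLinearSq a b := by
  have hpos : ∀ t ∈ uIcc (0:ℝ) 1, 0 < a + b * t := fun t ht =>
    add_mul_pos_of_mem_Icc ha hab (by rwa [uIcc_of_le zero_le_one] at ht)
  have hderiv : ∀ t ∈ uIcc (0:ℝ) 1,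
      HasDerivAt (fun t => t / b ^ 2 - 2 * a / b ^ 3 * log (a + b * t) - a ^ 2 / b ^ 3 * (a + b * t)⁻¹)
        (t ^ 2 * (a + b * t) ^ (-2 : ℤ)) t := by
    intro t ht
    have hlin : HasDerivAt (fun t => a + b * t) b t := by
      simpa using ((hasDerivAt_id t).const_mul b).const_add a
    refine ((((hasDerivAt_id t).div_const (b ^ 2)).sub
      ((hlin.log (hpos t ht).ne').const_mul (2 * a / b ^ 3))).sub
      ((hlin.inv (hpos t ht).ne').const_mul (a ^ 2 / b ^ 3))).congr_deriv ?_
    have := (hpos t ht).ne'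
    rw [zpow_neg, zpow_two]
    field_simp
    ring
  have hcont : ContinuousOn (fun t => t ^ 2 * (a + b * t) ^ (-2 : ℤ)) (uIcc 0 1) :=
    fun t ht => ((continuousAt_id.pow 2).mul ((continuousAt_const.add
      (continuousAt_const.mul continuousAt_id)).zpow₀ _ (Or.inl (hpos t ht).ne'))).continuousWithinAt
  rw [intervalIntegral.integral_eq_sub_of_hasDerivAt hderiv (hcont.intervalIntegrable),
    integralSqDivLinearSq]
  simp only [mul_zero, add_zero, mul_one]
  have := ha.ne'
  field_simp
  ring

theorem continuousAt_integralSqDivLinearSq {a b : ℝ} (hab : a + b ≠ 0) (hb : b ≠ 0) :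
    ContinuousAt (fun p : ℝ × ℝ => integralSqDivLinearSq p.1 p.2) (a, b) := by
  unfold integralSqDivLinearSq
  have hmullog := (continuous_mul_log.comp continuous_fst).continuousAt (x := (a, b))
  fun_prop (disch := simp [hab, hb])

theorem artanh_sub_div_add {a c : ℝ} (hac : a + c ≠ 0) :
    _root_.artanh ((a - c) / (a + c)) = 1 / 2 * log (a / c) := by
  unfold _root_.artanh
  congr 2
  field_simp
  ring

theorem integral_add_mul_cbrt_zpow_neg_two {a b : ℝ} (ha : 0 < a) (hab : 0 < a + b) (hb : b ≠ 0) :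
    ∫ x in (0:ℝ)..1, (a + b * x ^ ((1:ℝ) / 3)) ^ (-2 : ℤ) = 3 * integralSqDivLinearSq a b := by
  have hcont : ContinuousOn (fun t => (a + b * t) ^ (-2 : ℤ)) (Icc 0 1) := fun t ht =>
    ((continuousAt_const.add (continuousAt_const.mul continuousAt_id)).zpow₀ _
      (Or.inl (add_mul_pos_of_mem_Icc ha hab ht).ne')).continuousWithinAt
  have hsubst := intervalIntegral.integral_comp_rpow_inv_natCast three_ne_zero hcont
  rw [show (1:ℝ) / 3 = ((3:ℕ):ℝ)⁻¹ by norm_num, hsubst]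
  simp only [Nat.cast_ofNat, Nat.add_one_sub_one, mul_assoc, intervalIntegral.integral_const_mul,
    integral_sq_mul_zpow_neg_two ha hab hb]

theorem example1_K0_evaluation :
    (∀ η ∈ Set.Ioo (0:ℝ) 2,
      (∫ α in (0:ℝ)..1, (1 - (η / 2) * (1 - (4/3) * α ^ ((1:ℝ)/3))) ^ (-2 : ℤ)) =
        -(54 * (η - 6) * η - 81 * (2 - η) * (6 + η) * _root_.artanh (2 * η / (η - 6))) /
          (4 * (6 + η) * η ^ 3)) ∧
    Filter.Tendsto
      (fun η : ℝ => ∫ α in (0:ℝ)..1,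
        (1 - (η / 2) * (1 - (4/3) * α ^ ((1:ℝ)/3))) ^ (-2 : ℤ))
      (nhdsWithin 2 (Set.Iio 2)) (nhds (27 / 16)) := by
  have hK : ∀ η ∈ Ioo (0:ℝ) 2,
      ∫ α in (0:ℝ)..1, (1 - (η / 2) * (1 - (4/3) * α ^ ((1:ℝ)/3))) ^ (-2 : ℤ) =
        3 * integralSqDivLinearSq (1 - η / 2) (2 * η / 3) := by
    rintro η ⟨h0, h2⟩
    simp_rw [show ∀ x : ℝ, 1 - η / 2 * (1 - 4 / 3 * x) = (1 - η / 2) + 2 * η / 3 * x by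
      intro x; ring]
    exact integral_add_mul_cbrt_zpow_neg_two (by linarith) (by linarith) (by positivity)
  refine ⟨fun η hη => ?_, ?_⟩
  · obtain ⟨h0, h2⟩ := hη
    have hη6 : η - 6 ≠ 0 := by linarith
    have hartanh : _root_.artanh (2 * η / (η - 6)) =
        1 / 2 * (log (1 - η / 2) - log (1 - η / 2 + 2 * η / 3)) := by
      rw [show 2 * η / (η - 6) = (1 - η / 2 - (1 - η / 2 + 2 * η / 3)) /
          (1 - η / 2 + (1 - η / 2 + 2 * η / 3)) by
        rw [div_eq_div_iff hη6 (by linarith)]; ring,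
        artanh_sub_div_add (by linarith), log_div (by linarith) (by linarith)]
    rw [hK η ⟨h0, h2⟩, integralSqDivLinearSq, hartanh]
    field_simp
    ring
  · have hcont : ContinuousAt (fun η : ℝ => 3 * integralSqDivLinearSq (1 - η / 2) (2 * η / 3)) 2 :=
      continuousAt_const.mul ((continuousAt_integralSqDivLinearSq (a := 0) (b := 4 / 3)
        (by norm_num) (by norm_num)).comp_of_eq (f := fun η : ℝ => (1 - η / 2, 2 * η / 3))
          (by fun_prop) (by norm_num))
    have hval : 3 * integralSqDivLinearSq (1 - 2 / 2) (2 * 2 / 3) = 27 / 16 := by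
      norm_num [integralSqDivLinearSq]
    have hlim := hcont.tendsto.mono_left (nhdsWithin_le_nhds (s := Iio 2))
    rw [hval] at hlim
    refine hlim.congr' ?_
    filter_upwards [Ioo_mem_nhdsLT (show (0:ℝ) < 2 by norm_num)] with η hη using (hK η hη).symm
end
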